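/- Let (K,U) be a weak ℵ₀-concrete AEC. If M is an object of size μ and M̄ and N̄ are, respectively, a (μ,δ)-limit object and a (μ,μ×δ)-limit object over M, with δ < μ⁺ a limit ordinal, then M̄ ≅ N̄. -/

import Mathlib

/-!
Common framework: weak κ-concrete AECs (Lieberman–Rosický,
"Approximations of superstability in concrete accessible categories").
-/

universe u

open CategoryTheory CategoryTheory.Limits Cardinal

namespace CAEC

/-- A preorder is `κ`-directed if every subset of cardinality `< κ` has an upper bound. -/
def CardDirected (κ : Cardinal.{u}) (P : Type u) [Preorder P] : Prop :=
  ∀ s : Set P, #s < κ → ∃ ub : P, ∀ x ∈ s, x ≤ ub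

/-- The sharp inequality `lam ⊳ κ` of Adámek–Rosický (characterization 2.13): `lam ≥ κ` and
for every set `X` of cardinality `< lam`, the poset of subsets of `X` of cardinality `< κ`
has a cofinal subset of cardinality `< lam`. -/
def SharplyGreater (lam κ : Cardinal.{u}) : Prop :=
  κ ≤ lam ∧ ∀ X : Type u, #X < lam →
    ∃ S : Set {s : Set X // #s < κ}, #S < lam ∧
      ∀ t : Set X, #t < κ → ∃ s ∈ S, t ⊆ s.1

section Presentability

variable (K : Type u) [Category.{u} K]

/-- An object `A` is `lam`-presentable if its hom-functor preserves colimits of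
`lam`-directed diagrams. -/
def IsPresentableObj (lam : Cardinal.{u}) (A : K) : Prop :=
  ∀ (P : Type u) [Preorder P], CardDirected lam P →
    Nonempty (PreservesColimitsOfShape P (coyoneda.obj (Opposite.op A)))

/-- The size of an object: the least `μ` such that `A` is `μ⁺`-presentable
(the presentability rank of `A` is `μ⁺`). -/
noncomputable def objSize (A : K) : Cardinal.{u} :=
  sInf {μ : Cardinal.{u} | IsPresentableObj K (Order.succ μ) A}

/-- `K` is a `lam`-accessible category: `lam` is regular, `K` has `lam`-directed colimits and
there is a set of `lam`-presentable objects such that every object is a `lam`-directed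
colimit of objects from it. -/
def IsAccessibleCat (lam : Cardinal.{u}) : Prop :=
  lam.IsRegular ∧
  (∀ (P : Type u) [Preorder P] [Nonempty P], CardDirected lam P → HasColimitsOfShape P K) ∧
  ∃ S : Set K, (∀ A ∈ S, IsPresentableObj K lam A) ∧
    ∀ A : K, ∃ (P : Preord.{u}) (D : P ⥤ K),
      CardDirected lam P ∧ (∀ p : P, D.obj p ∈ S) ∧
      ∃ c : Cocone D, c.pt = A ∧ Nonempty (IsColimit c)

end Presentability

/-- A weak `(κ, lam)`-concrete AEC: a `lam`-accessible category `K` with directed colimits,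
all morphisms monomorphisms, together with a faithful functor `U : K ⥤ Set` which is
coherent, has concrete monomorphisms and preserves `κ`-directed colimits.  As is standard,
we also assume amalgamation, joint embedding and largeness (arbitrarily large objects). -/
structure WeakCAEC (κ lam : Cardinal.{u}) : Type (u + 1) where
  K : Type u
  [instCat : Category.{u} K]
  U : K ⥤ Type u
  faithful : U.Faithful
  allMono : ∀ {A B : K} (f : A ⟶ B), Mono f
  hasDirectedColimits : ∀ (P : Type u) [Preorder P] [IsDirected P (· ≤ ·)] [Nonempty P],
    HasColimitsOfShape P K
  concreteMono : ∀ {A B : K} (f : A ⟶ B), Function.Injective (U.map f)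
  coherent : ∀ {A B C : K} (f : A ⟶ C) (g : B ⟶ C) (t : U.obj A → U.obj B),
    U.map g ∘ t = U.map f → ∃ h : A ⟶ B, U.map h = t ∧ h ≫ g = f
  preservesKDirected : ∀ (P : Type u) [Preorder P], CardDirected κ P →
    Nonempty (PreservesColimitsOfShape P U)
  accessible : IsAccessibleCat K lam
  amalgamation : ∀ {A B C : K} (f : A ⟶ B) (g : A ⟶ C),
    ∃ (D : K) (u : B ⟶ D) (v : C ⟶ D), f ≫ u = g ≫ v
  jointEmbedding : ∀ A B : K, ∃ (D : K) (_ : A ⟶ D) (_ : B ⟶ D), True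
  large : ∀ μ : Cardinal.{u}, ∃ M : K, μ ≤ objSize K M

attribute [instance] WeakCAEC.instCat

namespace WeakCAEC

variable {κ lam : Cardinal.{u}} (W : WeakCAEC κ lam)

/-- The size of an object of `W` (its presentability rank is `size⁺`). -/
noncomputable def size (A : W.K) : Cardinal.{u} := objSize W.K A

/-- Galois types over `M`: pairs of a morphism `f : M ⟶ N` and an element of `U N`. -/
def GType (M : W.K) : Type u := Σ N : W.K, (M ⟶ N) × W.U.obj N

/-- Equivalence of Galois types over `M`, via amalgamation: `(f, a)` and `(g, b)` are
equivalent if they can be equalized by a pair of morphisms into a common extension. -/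
def TypeEq {M : W.K} (x y : W.GType M) : Prop :=
  ∃ (R : W.K) (u : x.1 ⟶ R) (v : y.1 ⟶ R),
    x.2.1 ≫ u = y.2.1 ≫ v ∧ W.U.map u x.2.2 = W.U.map v y.2.2

/-- `M'` realizes all Galois types over `M` via `g : M ⟶ M'`. -/
def RealizesAll {M M' : W.K} (g : M ⟶ M') : Prop :=
  ∀ (P : W.K) (f : M ⟶ P) (a : W.U.obj P), ∃ b : W.U.obj M',
    W.TypeEq ⟨P, f, a⟩ ⟨M', g, b⟩

/-- `W` is `μ`-stable: there are at most `μ` Galois types over any object of size `μ`. -/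
def Stable (μ : Cardinal.{u}) : Prop :=
  ∀ M : W.K, W.size M = μ → #(Quot (W.TypeEq (M := M))) ≤ μ

/-- `M` is `μ`-saturated: every Galois type over a subobject of size `< μ` is realized. -/
def Saturated (μ : Cardinal.{u}) (M : W.K) : Prop :=
  ∀ (M₀ : W.K) (f : M₀ ⟶ M), W.size M₀ < μ → W.RealizesAll f

/-- `M` is saturated if it is `|M|`-saturated. -/
def SaturatedObj (M : W.K) : Prop := W.Saturated (W.size M) M

/-- `M'` is `μ`-universal over `M`, witnessed by `m : M ⟶ M'`: every `h : M ⟶ N` with `N`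
of size at most `μ` factors through `m`. -/
def UniversalVia (μ : Cardinal.{u}) {M M' : W.K} (m : M ⟶ M') : Prop :=
  ∀ (N : W.K) (h : M ⟶ N), W.size N ≤ μ → ∃ t : N ⟶ M', h ≫ t = m

/-- `λ_U`: the least cardinal `ρ` such that `U` preserves `ρ`-presentable objects. -/
noncomputable def lamU : Cardinal.{u} :=
  sInf {ρ : Cardinal.{u} | ∀ A : W.K, IsPresentableObj W.K ρ A → #(W.U.obj A) < ρ}

/-- `W` is `ν`-categorical: it has exactly one object of size `ν` up to isomorphism. -/
def Categorical (ν : Cardinal.{u}) : Prop :=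
  (∃ M : W.K, W.size M = ν) ∧
  ∀ M N : W.K, W.size M = ν → W.size N = ν → Nonempty (M ≅ N)

end WeakCAEC

section Chains

variable (K : Type u) [Category.{u} K]

/-- A chain of objects of `K` indexed by the ordinals below `δ`. -/
structure OChain (δ : Ordinal.{u}) : Type (u + 1) where
  obj : ∀ i : Ordinal.{u}, i < δ → K
  map : ∀ (i j : Ordinal.{u}) (hij : i ≤ j) (hj : j < δ),
    obj i (lt_of_le_of_lt hij hj) ⟶ obj j hj
  map_id : ∀ (i : Ordinal.{u}) (h : i < δ), map i i le_rfl h = 𝟙 (obj i h)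
  map_comp : ∀ (i j k : Ordinal.{u}) (hij : i ≤ j) (hjk : j ≤ k) (hk : k < δ),
    map i k (hij.trans hjk) hk =
      map i j hij (lt_of_le_of_lt hjk hk) ≫ map j k hjk hk

namespace OChain

variable {K} {δ : Ordinal.{u}} (C : OChain K δ)

/-- The restriction of a chain to the ordinals below `i ≤ δ`, as a diagram. -/
def diag (i : Ordinal.{u}) (hi : i ≤ δ) : {j : Ordinal.{u} // j < i} ⥤ K where
  obj j := C.obj j.1 (lt_of_lt_of_le j.2 hi)
  map {j k} f := C.map j.1 k.1 (leOfHom f) _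
  map_id _ := C.map_id _ _
  map_comp _ _ := C.map_comp _ _ _ _ _ _

/-- The cocone over the restriction of the chain below `i` with apex the `i`-th object. -/
def coconeAt (i : Ordinal.{u}) (hi : i < δ) : Cocone (C.diag i hi.le) where
  pt := C.obj i hi
  ι :=
    { app := fun j => C.map j.1 i j.2.le hi
      naturality := by
        intro j k f
        dsimp [diag]
        rw [Category.comp_id, ← C.map_comp] }

/-- The chain is continuous: at every limit ordinal, the chain is the colimit of its
restriction. -/
def IsContinuous : Prop :=
  ∀ (i : Ordinal.{u}) (hi : i < δ), Order.IsSuccLimit i → Nonempty (IsColimit (C.coconeAt i hi))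

/-- `N` is a colimit of the chain `C`. -/
def IsColimitOf (N : K) : Prop :=
  ∃ c : Cocone (C.diag δ le_rfl), c.pt = N ∧ Nonempty (IsColimit c)

end OChain

end Chains

namespace WeakCAEC

variable {κ lam : Cardinal.{u}} (W : WeakCAEC κ lam)

/-- A `(μ, δ)`-chain: a continuous chain of objects of size `μ` in which each successor is
`μ`-universal over its predecessor. -/
def IsMuChain (μ : Cardinal.{u}) {δ : Ordinal.{u}} (C : OChain W.K δ) : Prop :=
  C.IsContinuous ∧ (∀ (i : Ordinal.{u}) (h : i < δ), W.size (C.obj i h) = μ) ∧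
  ∀ (i : Ordinal.{u}) (hi : i + 1 < δ),
    W.UniversalVia μ (C.map i (i + 1) le_self_add hi)

/-- `M̄` is a `(μ, δ)`-limit object over `M₀`: the colimit of a `(μ, δ)`-chain
(with `δ` a limit ordinal) whose first term is `M₀`. -/
def IsLimitObjOver (μ : Cardinal.{u}) (δ : Ordinal.{u}) (M₀ Mbar : W.K) : Prop :=
  Order.IsSuccLimit δ ∧ ∃ C : OChain W.K δ, W.IsMuChain μ C ∧
    (∃ h0 : (0 : Ordinal.{u}) < δ, C.obj 0 h0 = M₀) ∧ C.IsColimitOf Mbar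

/-- A `1`-special chain: a continuous chain of objects of size `μ` in which each successor
realizes all Galois types over its predecessor. -/
def OneSpecialChain (μ : Cardinal.{u}) {δ : Ordinal.{u}} (C : OChain W.K δ) : Prop :=
  C.IsContinuous ∧ (∀ (i : Ordinal.{u}) (h : i < δ), W.size (C.obj i h) = μ) ∧
  ∀ (i : Ordinal.{u}) (hi : i + 1 < δ),
    W.RealizesAll (C.map i (i + 1) le_self_add hi)

/-- `N` is a `1`-special extension of `M` (both of size `μ`): `N` is the colimit of a
continuous chain of length `μ` starting at `M`, of objects of size `μ`, in which each
successor realizes all Galois types over its predecessor. -/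
def OneSpecial (μ : Cardinal.{u}) (M N : W.K) : Prop :=
  ∃ C : OChain W.K μ.ord, W.OneSpecialChain μ C ∧
    (∃ h0 : (0 : Ordinal.{u}) < μ.ord, C.obj 0 h0 = M) ∧ C.IsColimitOf N

/-- `m : M ⟶ M̄` exhibits `M̄` as a `1`-special extension of `M`, with `m` the colimit
injection of the first term of the witnessing chain. -/
def OneSpecialVia (μ : Cardinal.{u}) {M Mbar : W.K} (m : M ⟶ Mbar) : Prop :=
  ∃ C : OChain W.K μ.ord, W.OneSpecialChain μ C ∧
    ∃ (h0 : (0 : Ordinal.{u}) < μ.ord) (hM : C.obj 0 h0 = M)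
      (c : Cocone (C.diag μ.ord le_rfl)) (_ : IsColimit c) (hpt : c.pt = Mbar),
      eqToHom hM.symm ≫ c.ι.app ⟨0, h0⟩ ≫ eqToHom hpt = m

end WeakCAEC

end CAEC
namespace CAEC

/-- The category `Lin` of linear orders and order embeddings. -/
structure LinCat : Type (u + 1) where
  carrier : Type u
  [str : LinearOrder carrier]

attribute [instance] LinCat.str

instance : Category.{u} LinCat.{u} where
  Hom A B := A.carrier ↪o B.carrier
  id A := (OrderIso.refl A.carrier).toOrderEmbedding
  comp f g := f.trans g
  id_comp _ := RelEmbedding.ext fun _ => rfl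
  comp_id _ := RelEmbedding.ext fun _ => rfl
  assoc _ _ _ := RelEmbedding.ext fun _ => rfl

/-- The linear order `μ` (the initial ordinal of `μ`), as an object of `Lin`. -/
noncomputable def linOfCard (μ : Cardinal.{u}) : LinCat.{u} := ⟨μ.ord.ToType⟩

/-- `μ^{<ω}`: the lexicographically ordered set of finite sequences from `μ`,
as an object of `Lin`. -/
noncomputable def linPowOmega (μ : Cardinal.{u}) : LinCat.{u} := ⟨List μ.ord.ToType⟩

/-- `J` contains an increasing sequence of length (the initial ordinal of) `θ`. -/
def HasIncreasingSeq (J : LinCat.{u}) (θ : Cardinal.{u}) : Prop :=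
  Nonempty (θ.ord.ToType ↪o J.carrier)

/-- The canonical order embedding `a.toType ↪o b.toType` for ordinals `a ≤ b`. -/
noncomputable def toTypeEmb {a b : Ordinal.{u}} (h : a ≤ b) : a.ToType ↪o b.ToType :=
  ((@Ordinal.ToType.mk a).symm.toOrderEmbedding.trans
    (OrderEmbedding.ofMapLEIff (fun x => (⟨x.1, lt_of_lt_of_le x.2 h⟩ : Set.Iio b))
      (fun _ _ => Iff.rfl))).trans (@Ordinal.ToType.mk b).toOrderEmbedding

/-- Extend an order embedding to lexicographic products (fixed second factor). -/
def lexEmb {A B C : Type u} [LinearOrder A] [LinearOrder B] [LinearOrder C]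
    (f : A ↪o B) : (A ×ₗ C) ↪o (B ×ₗ C) :=
  OrderEmbedding.ofMapLEIff
    (fun x => toLex (f (ofLex x).1, (ofLex x).2))
    (by
      intro x y
      show toLex (f (ofLex x).1, (ofLex x).2) ≤ toLex (f (ofLex y).1, (ofLex y).2) ↔
        toLex (ofLex x) ≤ toLex (ofLex y)
      rw [Prod.Lex.le_iff, Prod.Lex.le_iff]
      constructor
      · rintro (h | ⟨h1, h2⟩)
        · exact Or.inl (f.lt_iff_lt.mp h)
        · exact Or.inr ⟨f.injective h1, h2⟩
      · rintro (h | ⟨h1, h2⟩)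
        · exact Or.inl (f.lt_iff_lt.mpr h)
        · exact Or.inr ⟨congrArg f h1, h2⟩)

/-- The ordered sum `I × α` of `α` copies of the linear order `I`. -/
noncomputable def linOrdMul (I : LinCat.{u}) (α : Ordinal.{u}) : LinCat.{u} :=
  ⟨α.ToType ×ₗ I.carrier⟩

/-- The canonical embedding `I × α ↪ I × β` for `α ≤ β`, as a morphism of `Lin`. -/
noncomputable def linOrdMulHom (I : LinCat.{u}) {α β : Ordinal.{u}} (h : α ≤ β) :
    linOrdMul I α ⟶ linOrdMul I β :=
  lexEmb (toTypeEmb h)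

end CAEC

/-!
Let `C` and `D` be the `(μ, δ)`- and `(μ, μ * δ)`-chains over `M`. Going back and forth with
the `μ`-universality of successor steps, one builds by transfinite recursion maps
`C i ⟶ D (μ * i) ⟶ C (i + 1)` whose composites are the transition maps; at limit stages the
map out of `C i` comes from the continuity of `C`. Since the ordinals `μ * i`, `i < δ`, are
cofinal in `μ * δ`, these maps induce mutually inverse morphisms between the two colimits.
-/

namespace CAEC

namespace OChain

variable {K : Type u} [Category.{u} K] {δ : Ordinal.{u}}

section Legs

variable (C : OChain K δ)

/-- Typed by `C.obj` rather than `(C.diag δ _).obj`, so that `rw` with chain maps applies. -/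
def leg (c : Cocone (C.diag δ le_rfl)) (i : Ordinal.{u}) (hi : i < δ) : C.obj i hi ⟶ c.pt :=
  c.ι.app ⟨i, hi⟩

lemma map_comp_leg (c : Cocone (C.diag δ le_rfl)) {i j : Ordinal.{u}} (hij : i ≤ j)
    (hj : j < δ) : C.map i j hij hj ≫ C.leg c j hj = C.leg c i (lt_of_le_of_lt hij hj) :=
  c.w (homOfLE hij : (⟨i, _⟩ : {x : Ordinal.{u} // x < δ}) ⟶ ⟨j, hj⟩)

def coconeOfLegs {k : Ordinal.{u}} (hk : k ≤ δ) {X : K}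
    (l : ∀ i (hi : i < k), C.obj i (lt_of_lt_of_le hi hk) ⟶ X)
    (w : ∀ i j (hij : i ≤ j) (hj : j < k),
      C.map i j hij _ ≫ l j hj = l i (lt_of_le_of_lt hij hj)) :
    Cocone (C.diag k hk) where
  pt := X
  ι :=
    { app := fun i => l i.1 i.2
      naturality := fun i j f =>
        (w i.1 j.1 (leOfHom f) j.2).trans (Category.comp_id (l i.1 i.2)).symm }

def descLegs {c : Cocone (C.diag δ le_rfl)} (hc : IsColimit c) {X : K}
    (l : ∀ i (hi : i < δ), C.obj i hi ⟶ X)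
    (w : ∀ i j (hij : i ≤ j) (hj : j < δ), C.map i j hij hj ≫ l j hj = l i _) : c.pt ⟶ X :=
  hc.desc (C.coconeOfLegs le_rfl l w)

lemma leg_descLegs {c : Cocone (C.diag δ le_rfl)} (hc : IsColimit c) {X : K}
    (l : ∀ i (hi : i < δ), C.obj i hi ⟶ X)
    (w : ∀ i j (hij : i ≤ j) (hj : j < δ), C.map i j hij hj ≫ l j hj = l i _)
    (i : Ordinal.{u}) (hi : i < δ) : C.leg c i hi ≫ C.descLegs hc l w = l i hi :=
  hc.fac _ _

lemma hom_ext_leg {c : Cocone (C.diag δ le_rfl)} (hc : IsColimit c) {X : K} {f g : c.pt ⟶ X}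
    (h : ∀ i (hi : i < δ), C.leg c i hi ≫ f = C.leg c i hi ≫ g) : f = g :=
  hc.hom_ext fun i => h i.1 i.2

end Legs

def reindex {ε : Ordinal.{u}} (D : OChain K ε) (φ : Ordinal.{u} → Ordinal.{u})
    (hφ : Monotone φ) (hφδ : ∀ i < δ, φ i < ε) : OChain K δ where
  obj i hi := D.obj (φ i) (hφδ i hi)
  map i j hij hj := D.map (φ i) (φ j) (hφ hij) (hφδ j hj)
  map_id _ _ := D.map_id _ _
  map_comp _ _ _ _ _ _ := D.map_comp _ _ _ _ _ _

lemma IsColimitOf.reindex {ε : Ordinal.{u}} {D : OChain K ε} {N : K} (hD : D.IsColimitOf N)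
    (φ : Ordinal.{u} → Ordinal.{u}) (hφ : Monotone φ) (hφδ : ∀ i < δ, φ i < ε)
    (hcof : ∀ j < ε, ∃ i < δ, j ≤ φ i) : (D.reindex φ hφ hφδ).IsColimitOf N := by
  obtain ⟨c, hcN, ⟨hc⟩⟩ := hD
  let Φ : {i : Ordinal.{u} // i < δ} → {j : Ordinal.{u} // j < ε} :=
    fun i => ⟨φ i.1, hφδ i.1 i.2⟩
  have hΦ : Monotone Φ := fun _ _ h => hφ h
  have : hΦ.functor.Final := by
    rw [Monotone.final_functor_iff]
    intro j
    obtain ⟨i, hi, hji⟩ := hcof j.1 j.2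
    exact ⟨⟨i, hi⟩, hji⟩
  exact ⟨c.whisker hΦ.functor, hcN, ⟨(Functor.Final.isColimitWhiskerEquiv _ c).symm hc⟩⟩

structure Interleaving (C E : OChain K δ) where
  forth : ∀ i (hi : i < δ), C.obj i hi ⟶ E.obj i hi
  back : ∀ i (hi : i + 1 < δ), E.obj i (lt_of_le_of_lt le_self_add hi) ⟶ C.obj (i + 1) hi
  forth_naturality : ∀ i j (hij : i ≤ j) (hj : j < δ),
    C.map i j hij hj ≫ forth j hj = forth i _ ≫ E.map i j hij hj
  forth_back : ∀ i (hi : i + 1 < δ), forth i _ ≫ back i hi = C.map i (i + 1) le_self_add hi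
  back_forth : ∀ i (hi : i + 1 < δ),
    back i hi ≫ forth (i + 1) hi = E.map i (i + 1) le_self_add hi

variable {C E : OChain K δ}

namespace Interleaving

lemma back_naturality (I : Interleaving C E) {i j : Ordinal.{u}} (hij : i ≤ j) (hj : j + 1 < δ) :
    E.map i j hij (lt_of_le_of_lt le_self_add hj) ≫ I.back j hj =
      I.back i (lt_of_le_of_lt (add_le_add_left hij 1) hj) ≫
        C.map (i + 1) (j + 1) (add_le_add_left hij 1) hj := by
  rcases hij.lt_or_eq with hlt | rfl
  · have hi1 : i + 1 ≤ j := Order.add_one_le_of_lt hlt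
    rw [E.map_comp i (i + 1) j le_self_add hi1, ← I.back_forth, Category.assoc, Category.assoc,
      ← Category.assoc (I.forth _ _), ← I.forth_naturality, Category.assoc, I.forth_back,
      ← C.map_comp]
  · rw [E.map_id, C.map_id, Category.id_comp, Category.comp_id]

noncomputable def colimitIso (I : Interleaving C E) (hδ : Order.IsSuccLimit δ)
    {cC : Cocone (C.diag δ le_rfl)} {cE : Cocone (E.diag δ le_rfl)} (hC : IsColimit cC)
    (hE : IsColimit cE) : cC.pt ≅ cE.pt where
  hom := C.descLegs hC (fun i hi => I.forth i hi ≫ E.leg cE i hi)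
    fun i j hij hj => by
      rw [← Category.assoc, I.forth_naturality, Category.assoc, map_comp_leg]
  inv := E.descLegs hE
    (fun i hi => I.back i (hδ.add_one_lt hi) ≫ C.leg cC (i + 1) (hδ.add_one_lt hi))
    fun i j hij hj => by
      rw [← Category.assoc, I.back_naturality hij (hδ.add_one_lt hj), Category.assoc,
        map_comp_leg]
  hom_inv_id := hom_ext_leg C hC fun i hi => by
    rw [← Category.assoc, leg_descLegs, Category.assoc, leg_descLegs, ← Category.assoc,
      I.forth_back, map_comp_leg, Category.comp_id]
  inv_hom_id := hom_ext_leg E hE fun i hi => by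
    rw [← Category.assoc, leg_descLegs, Category.assoc, leg_descLegs, ← Category.assoc,
      I.back_forth, map_comp_leg, Category.comp_id]

lemma nonempty_iso (I : Interleaving C E) (hδ : Order.IsSuccLimit δ) {N N' : K}
    (hN : C.IsColimitOf N) (hN' : E.IsColimitOf N') : Nonempty (N ≅ N') := by
  obtain ⟨cC, rfl, ⟨hC⟩⟩ := hN
  obtain ⟨cE, rfl, ⟨hE⟩⟩ := hN'
  exact ⟨I.colimitIso hδ hC hE⟩

end Interleaving

def ExtendsBelow {i : Ordinal.{u}}
    (f : ∀ j < i, ∀ hj : j < δ, Option (C.obj j hj ⟶ E.obj j hj)) (hi : i < δ)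
    (t : C.obj i hi ⟶ E.obj i hi) : Prop :=
  ∀ j (hji : j < i) tj, f j hji (hji.trans hi) = some tj →
    C.map j i hji.le hi ≫ t = tj ≫ E.map j i hji.le hi

section Construction

variable {h0 : 0 < δ} (F₀ : C.obj 0 h0 ⟶ E.obj 0 h0)
  (step : ∀ i (hi : i + 1 < δ) (t : C.obj i (lt_of_le_of_lt le_self_add hi) ⟶ E.obj i _),
    ∃ (g : E.obj i _ ⟶ C.obj (i + 1) hi) (t' : C.obj (i + 1) hi ⟶ E.obj (i + 1) hi),
      t ≫ g = C.map i (i + 1) le_self_add hi ∧ g ≫ t' = E.map i (i + 1) le_self_add hi)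

open Classical in
/-- `none` marks a limit stage at which the earlier maps do not form a cocone;
`exists_forthRec_eq_some` shows that this never happens when `C` is continuous. -/
noncomputable def forthRec (i : Ordinal.{u}) :
    ∀ hi : i < δ, Option (C.obj i hi ⟶ E.obj i hi) :=
  Ordinal.limitRecOn i (fun _ => some F₀)
    (fun j ih hj => (ih (lt_of_le_of_lt le_self_add hj)).map fun t =>
      (step j hj t).choose_spec.choose)
    (fun _ _ ih hi => if h : ∃ t, ExtendsBelow ih hi t then some h.choose else none)

lemma forthRec_add_one (j : Ordinal.{u}) (hj : j + 1 < δ) :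
    forthRec F₀ step (j + 1) hj = (forthRec F₀ step j (lt_of_le_of_lt le_self_add hj)).map
      fun t => (step j hj t).choose_spec.choose := by
  rw [forthRec, Ordinal.limitRecOn_add_one]
  rfl

lemma eq_of_forthRec_add_one_eq_some {j : Ordinal.{u}} {hj : j + 1 < δ}
    {t : C.obj j (lt_of_le_of_lt le_self_add hj) ⟶ E.obj j _}
    {t' : C.obj (j + 1) hj ⟶ E.obj (j + 1) hj} (ht : forthRec F₀ step j _ = some t)
    (ht' : forthRec F₀ step (j + 1) hj = some t') : t' = (step j hj t).choose_spec.choose := by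
  rw [forthRec_add_one, ht] at ht'
  exact (Option.some.inj ht').symm

lemma extendsBelow_add_one {j : Ordinal.{u}} (hj : j + 1 < δ)
    {f : ∀ k < j + 1, ∀ hk : k < δ, Option (C.obj k hk ⟶ E.obj k hk)}
    {tj : C.obj j (lt_of_le_of_lt le_self_add hj) ⟶ E.obj j _}
    (hfj : f j (Order.lt_add_one_iff.2 le_rfl) _ = some tj)
    (htj : ExtendsBelow (fun k hk => f k (hk.trans (Order.lt_add_one_iff.2 le_rfl))) _ tj)
    {t : C.obj (j + 1) hj ⟶ E.obj (j + 1) hj}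
    (hsq : C.map j (j + 1) le_self_add hj ≫ t = tj ≫ E.map j (j + 1) le_self_add hj) :
    ExtendsBelow f hj t := by
  intro k hk tk hfk
  rcases (Order.lt_add_one_iff.1 hk).lt_or_eq with hkj | rfl
  · rw [C.map_comp k j (j + 1) hkj.le le_self_add, Category.assoc, hsq, ← Category.assoc,
      htj k hkj tk hfk, Category.assoc, ← E.map_comp]
  · cases hfk.symm.trans hfj
    exact hsq

lemma extendsBelow_of_isColimit {i : Ordinal.{u}} (hi : i < δ)
    (hC : IsColimit (C.coconeAt i hi))
    {f : ∀ j < i, ∀ hj : j < δ, Option (C.obj j hj ⟶ E.obj j hj)}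
    (hf : ∀ j (hji : j < i), ∃ t, f j hji _ = some t ∧
      ExtendsBelow (fun k hk => f k (hk.trans hji)) (hji.trans hi) t) :
    ∃ t, ExtendsBelow f hi t := by
  choose t hft hnat using hf
  let c : Cocone (C.diag i hi.le) :=
    C.coconeOfLegs hi.le (fun j hj => t j hj ≫ E.map j i hj.le hi) fun j k hjk hk => by
      rcases hjk.lt_or_eq with hlt | rfl
      · rw [← Category.assoc, hnat k hk j hlt _ (hft j _), Category.assoc, ← E.map_comp]
      · rw [C.map_id, Category.id_comp]
  refine ⟨show C.obj i hi ⟶ E.obj i hi from hC.desc c, fun j hji tj hfj => ?_⟩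
  cases (hft j hji).symm.trans hfj
  exact hC.fac c ⟨j, hji⟩

theorem exists_forthRec_eq_some (hC : C.IsContinuous) (i : Ordinal.{u}) (hi : i < δ) :
    ∃ t, forthRec F₀ step i hi = some t ∧
      ExtendsBelow (fun j _ => forthRec F₀ step j) hi t := by
  induction i using Ordinal.limitRecOn with
  | zero =>
    exact ⟨F₀, by rw [forthRec, Ordinal.limitRecOn_zero], fun _ hj => absurd hj not_lt_zero⟩
  | add_one j ih =>
    obtain ⟨tj, hfj, htj⟩ := ih (lt_of_le_of_lt le_self_add hi)
    have hstep := (step j hi tj).choose_spec.choose_spec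
    refine ⟨_, ?_, extendsBelow_add_one hi hfj htj (t := (step j hi tj).choose_spec.choose) ?_⟩
    · rw [forthRec_add_one, hfj]
      rfl
    · rw [← congrArg (· ≫ _) hstep.1, Category.assoc, hstep.2]
  | limit i hlim ih =>
    have hex := extendsBelow_of_isColimit hi (hC i hi hlim).some
      (f := fun j _ => forthRec F₀ step j) fun j hji => ih j hji (hji.trans hi)
    refine ⟨hex.choose, ?_, hex.choose_spec⟩
    rw [forthRec, Ordinal.limitRecOn_limit _ _ _ _ hlim]
    exact dif_pos hex

noncomputable def Interleaving.ofStep (hC : C.IsContinuous) : Interleaving C E where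
  forth i hi := (exists_forthRec_eq_some F₀ step hC i hi).choose
  back i hi := (step i hi (exists_forthRec_eq_some F₀ step hC i _).choose).choose
  forth_naturality i j hij hj := by
    rcases hij.lt_or_eq with hlt | rfl
    · obtain ⟨hfi, -⟩ := (exists_forthRec_eq_some F₀ step hC i (hlt.trans hj)).choose_spec
      exact (exists_forthRec_eq_some F₀ step hC j hj).choose_spec.2 i hlt _ hfi
    · rw [C.map_id, E.map_id, Category.id_comp, Category.comp_id]
  forth_back i hi := (step i hi _).choose_spec.choose_spec.1
  back_forth i hi := by
    rw [eq_of_forthRec_add_one_eq_some F₀ step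
      (exists_forthRec_eq_some F₀ step hC i _).choose_spec.1
      (exists_forthRec_eq_some F₀ step hC (i + 1) hi).choose_spec.1]
    exact (step i hi _).choose_spec.choose_spec.2

end Construction

end OChain

end CAEC

namespace CAEC.WeakCAEC

variable {κ lam : Cardinal.{u}} {W : WeakCAEC κ lam} {μ : Cardinal.{u}}

lemma UniversalVia.comp {A B B' : W.K} {m : A ⟶ B} (hm : W.UniversalVia μ m) (k : B ⟶ B') :
    W.UniversalVia μ (m ≫ k) := fun N h hN =>
  let ⟨t, ht⟩ := hm N h hN
  ⟨t ≫ k, by rw [← Category.assoc, ht]⟩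

lemma UniversalVia.exists_zigzag {A B A' B' : W.K} {m : A ⟶ B} {n : A' ⟶ B'}
    (hm : W.UniversalVia μ m) (hn : W.UniversalVia μ n) (hA' : W.size A' ≤ μ)
    (hB : W.size B ≤ μ) (t : A ⟶ A') :
    ∃ (g : A' ⟶ B) (t' : B ⟶ B'), t ≫ g = m ∧ g ≫ t' = n :=
  let ⟨g, hg⟩ := hm A' t hA'
  let ⟨t', ht'⟩ := hn B g hB
  ⟨g, t', hg, ht'⟩

lemma IsMuChain.universalVia_reindex {δ ε : Ordinal.{u}} {D : OChain W.K ε}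
    (hD : W.IsMuChain μ D) {φ : Ordinal.{u} → Ordinal.{u}} (hφ : StrictMono φ)
    (hφδ : ∀ i < δ, φ i < ε) (i : Ordinal.{u}) (hi : i + 1 < δ) :
    W.UniversalVia μ ((D.reindex φ hφ.monotone hφδ).map i (i + 1) le_self_add hi) := by
  have hstep : φ i + 1 ≤ φ (i + 1) :=
    Order.add_one_le_of_lt (hφ (Order.lt_add_one_iff.2 le_rfl))
  have hnext : φ i + 1 < ε := lt_of_le_of_lt hstep (hφδ _ hi)
  change W.UniversalVia μ (D.map (φ i) (φ (i + 1)) _ _)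
  rw [D.map_comp (φ i) (φ i + 1) (φ (i + 1)) le_self_add hstep]
  exact (hD.2.2 (φ i) hnext).comp _

end CAEC.WeakCAEC

open CAEC Cardinal in
theorem WeakCAEC.limit_obj_unique_mul_general {lam : Cardinal.{u}}
    (W : WeakCAEC Cardinal.aleph0 lam)
    (μ : Cardinal.{u}) (δ : Ordinal.{u})
    (M Mbar Nbar : W.K)
    (h₁ : W.IsLimitObjOver μ δ M Mbar) (h₂ : W.IsLimitObjOver μ (μ.ord * δ) M Nbar) :
    Nonempty (Mbar ≅ Nbar) := by
  obtain ⟨hδ, C, hC, ⟨h0, hC0⟩, hCM⟩ := h₁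
  obtain ⟨hε, D, hD, ⟨_, hD0⟩, hDN⟩ := h₂
  have hμ : 0 < μ.ord := pos_of_mul_pos_left hε.pos bot_le
  have hφ : StrictMono (μ.ord * ·) := strictMono_mul_left_of_pos hμ
  have hφδ : ∀ i < δ, μ.ord * i < μ.ord * δ := fun _ hi => hφ hi
  let E := D.reindex (μ.ord * ·) hφ.monotone hφδ
  have hE0 : E.obj 0 h0 = M := by simpa [E, OChain.reindex] using hD0
  let I := OChain.Interleaving.ofStep (E := E) (eqToHom (hC0.trans hE0.symm))
    (fun i hi t => (hC.2.2 i hi).exists_zigzag (hD.universalVia_reindex hφ hφδ i hi)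
      (hD.2.1 _ _).le (hC.2.1 _ _).le t) hC.1
  refine I.nonempty_iso hδ hCM (hDN.reindex _ hφ.monotone hφδ fun j hj => ?_)
  obtain ⟨i, hi, hji⟩ := (Ordinal.lt_mul_iff_of_isSuccLimit hδ).1 hj
  exact ⟨i, hi, hji.le⟩

open CAEC Cardinal in
/-- Lemma 5.4: in a weak `ℵ₀`-CAEC, if `M` has size `μ` and `M̄`, `N̄`
are respectively a `(μ, δ)`-limit object and a `(μ, μ×δ)`-limit object over `M`, with
`δ < μ⁺` a limit ordinal, then `M̄ ≅ N̄`. -/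
theorem WeakCAEC.limit_obj_unique_mul {lam : Cardinal.{u}}
    (W : WeakCAEC Cardinal.aleph0 lam)
    (μ : Cardinal.{u}) (δ : Ordinal.{u}) (hδ : Order.IsSuccLimit δ) (hδμ : δ < (Order.succ μ).ord)
    (M Mbar Nbar : W.K) (hM : W.size M = μ)
    (h₁ : W.IsLimitObjOver μ δ M Mbar) (h₂ : W.IsLimitObjOver μ (μ.ord * δ) M Nbar) :
    Nonempty (Mbar ≅ Nbar) :=
  WeakCAEC.limit_obj_unique_mul_general W μ δ M Mbar Nbar h₁ h₂
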